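/- Let (R,m) be a Noetherian local ring with residue field κ = R/m, and let M be a nonzero R-module of finite length, both regarded as objects of the derived category D(R) concentrated in degree 0. Then for every real number t, the infimum over all towers over κ reaching M with shifts n_1, …, n_k of the quantity Σ_{i=1}^{k} e^{n_i · t} is equal to length_R(M); moreover this infimum is attained by a tower with all shifts equal to 0. -/

import Mathlib

/-!
A distinguished triangle `E → E' → κ⟦n⟧ → E⟦1⟧` gives an exact sequence
`H⁰ E → H⁰ E' → H⁰ (κ⟦n⟧)`, so `length H⁰ E' ≤ length H⁰ E + length H⁰ (κ⟦n⟧)`, and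
`H⁰ (κ⟦n⟧) = Hⁿ κ` is `κ` for `n = 0` and `0` otherwise. Along a tower reaching `M`,
`length M = length H⁰ M` is therefore at most the number of zero shifts, each of which contributes
`e⁰ = 1` to `∑ e^{n_i t}`, while all other terms are positive. Conversely, over a local ring every
simple module is `κ`, so the short exact sequences of a composition series of `M` assemble into a
tower with `length M` shifts, all zero.
-/

open CategoryTheory Limits Pretriangulated IsLocalRing

/-- The length of a module, defined as the Krull dimension of its lattice of submodules. -/
noncomputable def moduleLength (R M : Type*) [Ring R] [AddCommGroup M] [Module R M] : ℕ∞ :=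
  WithBot.unbotD 0 (Order.krullDim (Submodule R M))

universe w u

variable {R : Type u} [CommRing R] [HasDerivedCategory.{w} (ModuleCat.{u} R)]

/-- A tower of distinguished triangles over `G` reaching `Y` with shifts `n 0, …, n (k-1)`:
objects `0 ≅ E 0, E 1, …, E k ≅ Y` of the derived category together with distinguished
triangles `E i ⟶ E (i+1) ⟶ G⟦n i⟧ ⟶ (E i)⟦1⟧`. -/
def IsTower (G Y : DerivedCategory (ModuleCat.{u} R)) {k : ℕ} (n : Fin k → ℤ)
    (E : Fin (k + 1) → DerivedCategory (ModuleCat.{u} R)) : Prop :=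
  IsZero (E 0) ∧ Nonempty (E (Fin.last k) ≅ Y) ∧
    ∀ i : Fin k, ∃ (f : E i.castSucc ⟶ E i.succ) (g : E i.succ ⟶ G⟦n i⟧)
      (h : G⟦n i⟧ ⟶ (E i.castSucc)⟦(1 : ℤ)⟧),
      Triangle.mk f g h ∈ distTriang (DerivedCategory (ModuleCat.{u} R))

open DerivedCategory
open scoped Finset

lemma moduleLength_eq_length (A M : Type*) [Ring A] [AddCommGroup M] [Module A M] :
    moduleLength A M = Module.length A M := by
  rw [moduleLength, ← Module.coe_length, WithBot.unbotD_coe]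

lemma Module.length_le_add_of_exact {A M N P : Type*} [Ring A] [AddCommGroup M] [Module A M]
    [AddCommGroup N] [Module A N] [AddCommGroup P] [Module A P]
    {f : M →ₗ[A] N} {g : N →ₗ[A] P} (hfg : Function.Exact f g) :
    Module.length A N ≤ Module.length A M + Module.length A P := by
  have hexact : Function.Exact (LinearMap.range f).subtype g.rangeRestrict := by
    rw [LinearMap.exact_iff, LinearMap.ker_rangeRestrict, Submodule.range_subtype,
      LinearMap.exact_iff.mp hfg]
  rw [Module.length_eq_add_of_exact _ _ (LinearMap.range f).injective_subtype
    g.surjective_rangeRestrict hexact]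
  exact add_le_add (Module.length_le_of_surjective _ f.surjective_rangeRestrict)
    (Module.length_le_of_injective _ (LinearMap.range g).injective_subtype)

lemma IsLocalRing.nonempty_linearEquiv_quotient_maximalIdeal {A M : Type*} [CommRing A]
    [IsLocalRing A] [AddCommGroup M] [Module A M] [IsSimpleModule A M] :
    Nonempty (M ≃ₗ[A] A ⧸ maximalIdeal A) := by
  obtain ⟨I, hI, e⟩ := isSimpleModule_iff_quot_maximal.mp ‹IsSimpleModule A M›
  obtain rfl := IsLocalRing.eq_maximalIdeal hI
  exact e

lemma Ideal.length_quotient_of_isMaximal {A : Type*} [CommRing A] (I : Ideal A) [hI : I.IsMaximal] :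
    Module.length A (A ⧸ I) = 1 :=
  have : IsSimpleModule A (A ⧸ I) := isSimpleModule_iff_isCoatom.mpr hI.out
  Module.length_eq_one _ _

lemma CategoryTheory.Pretriangulated.exists_mk_mem_distTriang_of_iso {C : Type*} [Category C]
    [Preadditive C] [HasZeroObject C] [HasShift C ℤ] [∀ n : ℤ, (shiftFunctor C n).Additive]
    [Pretriangulated C] (T : Triangle C) (hT : T ∈ distTriang C) {X₁ X₃ : C}
    (e₁ : X₁ ≅ T.obj₁) (e₃ : T.obj₃ ≅ X₃) :
    ∃ (f : X₁ ⟶ T.obj₂) (g : T.obj₂ ⟶ X₃) (h : X₃ ⟶ X₁⟦(1 : ℤ)⟧),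
      Triangle.mk f g h ∈ distTriang C := by
  refine ⟨e₁.hom ≫ T.mor₁, T.mor₂ ≫ e₃.hom, e₃.inv ≫ T.mor₃ ≫ e₁.inv⟦(1 : ℤ)⟧', ?_⟩
  refine isomorphic_distinguished _ hT _ (Triangle.isoMk _ _ e₁ (Iso.refl _) e₃.symm ?_ ?_ ?_)
  · exact Category.comp_id _
  · change (T.mor₂ ≫ e₃.hom) ≫ e₃.inv = 𝟙 T.obj₂ ≫ T.mor₂
    simp
  · change (e₃.inv ≫ T.mor₃ ≫ e₁.inv⟦(1 : ℤ)⟧') ≫ e₁.hom⟦(1 : ℤ)⟧' = e₃.inv ≫ T.mor₃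
    simp [← Functor.map_comp]

lemma length_homology_zero_shift_single (X : ModuleCat.{u} R) (n : ℤ) :
    Module.length R ((homologyFunctor (ModuleCat.{u} R) 0).obj
        (((singleFunctor (ModuleCat.{u} R) 0).obj X)⟦n⟧)) =
      if n = 0 then Module.length R X else 0 := by
  let e := ((homologyFunctor (ModuleCat.{u} R) 0).shiftIso n 0 n
    (add_zero n)).app ((singleFunctor (ModuleCat.{u} R) 0).obj X)
  split_ifs with hn
  · subst hn
    exact (e ≪≫ (singleFunctorCompHomologyFunctorIso _ 0).app X).toLinearEquiv.length_eq
  · rw [Module.length_eq_zero_iff]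
    refine ModuleCat.subsingleton_of_isZero (IsZero.of_iso ?_ e)
    rcases lt_or_gt_of_ne hn with hn | hn
    · exact isZero_of_isGE _ 0 n hn
    · exact isZero_of_isLE _ 0 n hn

lemma length_homology_zero_obj₂_le (T : Triangle (DerivedCategory (ModuleCat.{u} R)))
    (hT : T ∈ distTriang (DerivedCategory (ModuleCat.{u} R))) :
    Module.length R ((homologyFunctor (ModuleCat.{u} R) 0).obj T.obj₂) ≤
      Module.length R ((homologyFunctor (ModuleCat.{u} R) 0).obj T.obj₁) +
        Module.length R ((homologyFunctor (ModuleCat.{u} R) 0).obj T.obj₃) :=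
  Module.length_le_add_of_exact <| (ShortComplex.ShortExact.moduleCat_exact_iff_function_exact _).mp
    (HomologySequence.exact₂ T hT 0)

namespace IsTower

variable {G Y : DerivedCategory (ModuleCat.{u} R)} {k : ℕ}

lemma init {n : Fin (k + 1) → ℤ} {E : Fin (k + 2) → DerivedCategory (ModuleCat.{u} R)}
    (hE : IsTower G Y n E) :
    IsTower G (E (Fin.last k).castSucc) (Fin.init n) (Fin.init E) :=
  ⟨hE.1, ⟨Iso.refl _⟩, fun i => hE.2.2 i.castSucc⟩

lemma snoc {n : Fin k → ℤ} {E : Fin (k + 1) → DerivedCategory (ModuleCat.{u} R)}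
    {T : Triangle (DerivedCategory (ModuleCat.{u} R))} (hE : IsTower G T.obj₁ n E)
    (hT : T ∈ distTriang (DerivedCategory (ModuleCat.{u} R))) {m : ℤ} (e : T.obj₃ ≅ G⟦m⟧) :
    IsTower G T.obj₂ (Fin.snoc n m) (Fin.snoc E T.obj₂) := by
  obtain ⟨hzero, ⟨eLast⟩, htri⟩ := hE
  refine ⟨?_, ?_, fun i => Fin.lastCases ?_ (fun j => ?_) i⟩
  · simpa only [← Fin.castSucc_zero, Fin.snoc_castSucc] using hzero
  · rw [Fin.snoc_last]
    exact ⟨Iso.refl _⟩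
  · rw [Fin.succ_last, Fin.snoc_last, Fin.snoc_castSucc, Fin.snoc_last]
    exact exists_mk_mem_distTriang_of_iso T hT eLast e
  · rw [Fin.succ_castSucc, Fin.snoc_castSucc, Fin.snoc_castSucc, Fin.snoc_castSucc]
    exact htri j

lemma length_homology_le {n : Fin k → ℤ} {E : Fin (k + 1) → DerivedCategory (ModuleCat.{u} R)}
    (hE : IsTower G Y n E) :
    Module.length R ((homologyFunctor (ModuleCat.{u} R) 0).obj Y) ≤
      ∑ i, Module.length R ((homologyFunctor (ModuleCat.{u} R) 0).obj (G⟦n i⟧)) := by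
  induction k generalizing Y with
  | zero =>
    obtain ⟨hzero, ⟨eLast⟩, -⟩ := hE
    have : Subsingleton ((homologyFunctor (ModuleCat.{u} R) 0).obj Y) :=
      ModuleCat.subsingleton_of_isZero (Functor.map_isZero _ (hzero.of_iso eLast.symm))
    simp
  | succ k ih =>
    obtain ⟨f, g, h, hT⟩ := hE.2.2 (Fin.last k)
    obtain ⟨eLast⟩ := hE.2.1
    rw [Fin.sum_univ_castSucc]
    calc _ = Module.length R ((homologyFunctor (ModuleCat.{u} R) 0).obj
          (E (Fin.last (k + 1)))) :=
          ((homologyFunctor (ModuleCat.{u} R) 0).mapIso eLast).toLinearEquiv.length_eq.symm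
      _ ≤ _ := length_homology_zero_obj₂_le _ hT
      _ ≤ _ := add_le_add (ih hE.init) le_rfl

lemma length_le_card_filter_eq_zero [IsLocalRing R] {M : Type u} [AddCommGroup M] [Module R M]
    {n : Fin k → ℤ} {E : Fin (k + 1) → DerivedCategory (ModuleCat.{u} R)}
    (hE : IsTower ((singleFunctor (ModuleCat.{u} R) 0).obj
      (ModuleCat.of R (R ⧸ maximalIdeal R)))
      ((singleFunctor (ModuleCat.{u} R) 0).obj (ModuleCat.of R M)) n E) :
    Module.length R M ≤ #{i | n i = 0} := by
  calc Module.length R M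
      = Module.length R ((homologyFunctor (ModuleCat.{u} R) 0).obj
          ((singleFunctor (ModuleCat.{u} R) 0).obj (ModuleCat.of R M))) :=
        ((singleFunctorCompHomologyFunctorIso _ 0).app
          (ModuleCat.of R M)).toLinearEquiv.length_eq.symm
    _ ≤ _ := hE.length_homology_le
    _ = #{i | n i = 0} := by
      simp_rw [length_homology_zero_shift_single, Ideal.length_quotient_of_isMaximal,
        Finset.sum_boole]

end IsTower

lemma exists_isTower_const_zero_of_isFiniteLength [IsLocalRing R] {M : Type u} [AddCommGroup M]
    [Module R M] (hM : IsFiniteLength R M) :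
    ∃ (k : ℕ) (E : Fin (k + 1) → DerivedCategory (ModuleCat.{u} R)),
      (k : ℕ∞) = Module.length R M ∧
      IsTower ((singleFunctor (ModuleCat.{u} R) 0).obj
        (ModuleCat.of R (R ⧸ maximalIdeal R)))
        ((singleFunctor (ModuleCat.{u} R) 0).obj (ModuleCat.of R M))
        (fun _ : Fin k => (0 : ℤ)) E := by
  induction hM with
  | of_subsingleton =>
    refine ⟨0, fun _ => _, by simp, ?_, ⟨Iso.refl _⟩, Fin.elim0⟩
    exact Functor.map_isZero _ (ModuleCat.isZero_of_subsingleton _)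
  | @of_simple_quotient M _ _ N _ _ ih =>
    obtain ⟨k, E, hk, hE⟩ := ih
    have hexact := LinearMap.exact_subtype_mkQ N
    have hS := ModuleCat.shortComplex_shortExact
      (ModuleCat.shortComplexOfCompEqZero _ _ hexact.linearMap_comp_eq_zero)
      hexact N.injective_subtype N.mkQ_surjective
    obtain ⟨eκ⟩ := IsLocalRing.nonempty_linearEquiv_quotient_maximalIdeal (A := R) (M := M ⧸ N)
    have hsnoc : (Fin.snoc (fun _ : Fin k => (0 : ℤ)) 0 : Fin (k + 1) → ℤ) = fun _ => 0 := by
      ext i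
      refine Fin.lastCases ?_ (fun j => ?_) i <;> simp
    refine ⟨k + 1, _, ?_, hsnoc ▸ hE.snoc hS.singleTriangle_distinguished
      ((singleFunctor (ModuleCat.{u} R) 0).mapIso eκ.toModuleIso ≪≫
        (shiftFunctorZero _ ℤ).symm.app _)⟩
    rw [Module.length_eq_add_of_exact N.subtype N.mkQ N.injective_subtype N.mkQ_surjective
      hexact, Module.length_eq_one R (M ⧸ N), ← hk, Nat.cast_succ]

lemma card_filter_eq_zero_le_sum_exp {k : ℕ} (n : Fin k → ℤ) (t : ℝ) :
    (#{i | n i = 0} : ℝ) ≤ ∑ i, Real.exp (n i * t) := by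
  rw [Finset.natCast_card_filter]
  refine Finset.sum_le_sum fun i _ => ?_
  split_ifs with hi
  · simp [hi]
  · exact (Real.exp_pos _).le

theorem complexity_eq_length_general [IsLocalRing R]
    (M : Type u) [AddCommGroup M] [Module R M]
    (hM : IsFiniteLength R M) (t : ℝ) :
    IsGLB {x : ℝ | ∃ (k : ℕ) (n : Fin k → ℤ)
        (E : Fin (k + 1) → DerivedCategory (ModuleCat.{u} R)),
        IsTower ((DerivedCategory.singleFunctor (ModuleCat.{u} R) 0).obj
            (ModuleCat.of R (R ⧸ maximalIdeal R)))
          ((DerivedCategory.singleFunctor (ModuleCat.{u} R) 0).obj (ModuleCat.of R M)) n E ∧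
        x = ∑ i : Fin k, Real.exp (n i * t)}
      ((moduleLength R M).toNat : ℝ) ∧
    ∃ (k : ℕ) (E : Fin (k + 1) → DerivedCategory (ModuleCat.{u} R)),
      IsTower ((DerivedCategory.singleFunctor (ModuleCat.{u} R) 0).obj
          (ModuleCat.of R (R ⧸ maximalIdeal R)))
        ((DerivedCategory.singleFunctor (ModuleCat.{u} R) 0).obj (ModuleCat.of R M))
        (fun _ : Fin k => (0 : ℤ)) E ∧
      (∑ _i : Fin k, Real.exp ((0 : ℤ) * t)) = ((moduleLength R M).toNat : ℝ) := by
  obtain ⟨k, E, hk, hE⟩ := exists_isTower_const_zero_of_isFiniteLength hM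
  have hlength : ((moduleLength R M).toNat : ℝ) = k := by
    rw [moduleLength_eq_length, ← hk, ENat.toNat_natCast]
  rw [hlength]
  refine ⟨⟨?_, fun y hy => hy ⟨k, _, E, hE, by simp⟩⟩, k, E, hE, by simp⟩
  rintro _ ⟨_, n, F, hF, rfl⟩
  have hk_le : k ≤ #{i | n i = 0} := by
    exact_mod_cast hk.trans_le (IsTower.length_le_card_filter_eq_zero hF)
  exact (Nat.cast_le.mpr hk_le).trans (card_filter_eq_zero_le_sum_exp n t)

/-- Let `(R,m)` be a Noetherian local ring with residue field
`κ = R ⧸ m` and `M` a nonzero `R`-module of finite length, regarded as objects of `D(R)`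
concentrated in degree `0`. For every real `t`, the set of values `∑ i, e^{n i · t}` over
all towers over `κ` reaching `M` has greatest lower bound `length_R M`; moreover this
infimum is attained by a tower all of whose shifts are `0`. -/
theorem complexity_eq_length [IsNoetherianRing R] [IsLocalRing R]
    (M : Type u) [AddCommGroup M] [Module R M] [Nontrivial M]
    (hM : IsFiniteLength R M) (t : ℝ) :
    IsGLB {x : ℝ | ∃ (k : ℕ) (n : Fin k → ℤ)
        (E : Fin (k + 1) → DerivedCategory (ModuleCat.{u} R)),
        IsTower ((DerivedCategory.singleFunctor (ModuleCat.{u} R) 0).obj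
            (ModuleCat.of R (R ⧸ maximalIdeal R)))
          ((DerivedCategory.singleFunctor (ModuleCat.{u} R) 0).obj (ModuleCat.of R M)) n E ∧
        x = ∑ i : Fin k, Real.exp (n i * t)}
      ((moduleLength R M).toNat : ℝ) ∧
    ∃ (k : ℕ) (E : Fin (k + 1) → DerivedCategory (ModuleCat.{u} R)),
      IsTower ((DerivedCategory.singleFunctor (ModuleCat.{u} R) 0).obj
          (ModuleCat.of R (R ⧸ maximalIdeal R)))
        ((DerivedCategory.singleFunctor (ModuleCat.{u} R) 0).obj (ModuleCat.of R M))
        (fun _ : Fin k => (0 : ℤ)) E ∧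
      (∑ _i : Fin k, Real.exp ((0 : ℤ) * t)) = ((moduleLength R M).toNat : ℝ) :=
  complexity_eq_length_general M hM t
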